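/- Let K be a field of characteristic 2 and n ≥ 2. The derived algebra of the orthogonal Lie algebra o_n(K) = {A ∈ gl_n(K) : A symmetric} equals the space Alt_n(K) of alternating matrices (symmetric with zero diagonal), and hence has dimension n(n−1)/2. -/

import Mathlib

open Matrix

/-- The submodule of alternating matrices. -/
def altSub (K : Type*) [Field K] (n : ℕ) : Submodule K (Matrix (Fin n) (Fin n) K) where
  carrier := {M | M.IsSymm ∧ ∀ i, M i i = 0}
  add_mem' := fun ha hb => ⟨ha.1.add hb.1, fun i => by simp [Matrix.add_apply, ha.2 i, hb.2 i]⟩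
  zero_mem' := ⟨Matrix.isSymm_zero, fun i => rfl⟩
  smul_mem' := fun c M hM => ⟨hM.1.smul c, fun i => by simp [Matrix.smul_apply, hM.2 i]⟩

lemma card_lt_pairs (n : ℕ) :
    Fintype.card {p : Fin n × Fin n // p.1 < p.2} = n * (n - 1) / 2 := by
  have e : {p : Fin n × Fin n // p.1 < p.2} ≃ Σ j : Fin n, Fin j :=
    { toFun := fun p => ⟨p.1.2, ⟨p.1.1, p.2⟩⟩
      invFun := fun x => ⟨(⟨x.2.1, x.2.2.trans x.1.2⟩, x.1), x.2.2⟩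
      left_inv := fun p => rfl
      right_inv := fun x => rfl }
  rw [Fintype.card_congr e, Fintype.card_sigma]
  simp only [Fintype.card_fin]
  rw [Fin.sum_univ_eq_sum_range (fun i => i) n, Finset.sum_range_id]

/-- The alternating matrices are linearly equivalent to functions on ordered pairs. -/
noncomputable def altEquiv (K : Type*) [Field K] (n : ℕ) :
    altSub K n ≃ₗ[K] ({p : Fin n × Fin n // p.1 < p.2} → K) where
  toFun M := fun p => M.1 p.1.1 p.1.2
  map_add' a b := rfl
  map_smul' c a := rfl
  invFun f := ⟨Matrix.of fun i j =>
      if h : i < j then f ⟨(i, j), h⟩ else if h : j < i then f ⟨(j, i), h⟩ else 0, by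
    constructor
    · ext i j
      simp only [Matrix.transpose_apply, Matrix.of_apply]
      rcases lt_trichotomy i j with h | h | h
      · rw [dif_pos h, dif_neg (asymm h), dif_pos h]
      · subst h; simp
      · rw [dif_pos h, dif_neg (asymm h), dif_pos h]
    · intro i
      simp⟩
  left_inv M := by
    apply Subtype.ext
    ext i j
    simp only [Matrix.of_apply]
    rcases lt_trichotomy i j with h | h | h
    · rw [dif_pos h]
    · subst h; simp [M.2.2 i]
    · rw [dif_neg (asymm h), dif_pos h]
      exact (M.2.1.apply i j).symm ▸ (M.2.1.apply j i)
  right_inv f := by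
    funext p
    simp only [Matrix.of_apply, dif_pos p.2]

lemma bracket_mem_alt {K : Type*} [Field K] [CharP K 2] {n : ℕ}
    (a b : Matrix (Fin n) (Fin n) K) (ha : a.IsSymm) (hb : b.IsSymm) :
    ⁅a, b⁆ ∈ altSub K n := by
  constructor
  · show (⁅a, b⁆)ᵀ = ⁅a, b⁆
    ext i j
    rw [Ring.lie_def]
    simp only [Matrix.transpose_apply, Matrix.sub_apply, Matrix.mul_apply]
    have e1 : ∑ k, a j k * b k i = ∑ k, b i k * a k j :=
      Finset.sum_congr rfl fun k _ => by rw [ha.apply k j, hb.apply i k, mul_comm]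
    have e2 : ∑ k, b j k * a k i = ∑ k, a i k * b k j :=
      Finset.sum_congr rfl fun k _ => by rw [hb.apply k j, ha.apply i k, mul_comm]
    rw [e1, e2, CharTwo.sub_eq_add, CharTwo.sub_eq_add, add_comm]
  · intro i
    rw [Ring.lie_def, Matrix.sub_apply, Matrix.mul_apply, Matrix.mul_apply, sub_eq_zero]
    exact Finset.sum_congr rfl fun k _ => by rw [mul_comm, hb.apply i k, ha.apply k i]

lemma gen_eq_bracket {K : Type*} [Field K] [CharP K 2] {n : ℕ} {i j : Fin n} (hij : i ≠ j) :
    single i j (1 : K) + single j i 1 =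
      ⁅single i i (1 : K), single i j 1 + single j i 1⁆ := by
  haveI : Nonempty (Fin n) := ⟨i⟩
  have h1 : single i i (1 : K) * single j i 1 = 0 :=
    single_mul_single_of_ne _ _ _ _ hij _
  have h2 : single i j (1 : K) * single i i 1 = 0 :=
    single_mul_single_of_ne _ _ _ _ hij.symm _
  rw [Ring.lie_def, mul_add, add_mul, single_mul_single_same, h1, h2,
    single_mul_single_same, one_mul, add_zero, zero_add, CharTwo.sub_eq_add]

lemma genMat_mem_alt {K : Type*} [Field K] {n : ℕ} {i j : Fin n} (hij : i ≠ j) :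
    single i j (1 : K) + single j i 1 ∈ altSub K n := by
  have htr : ∀ (a b : Fin n) (c : K), (single a b c)ᵀ = single b a c := by
    intro a b c
    ext x y
    simp [Matrix.single, and_comm]
  constructor
  · show _ᵀ = _
    rw [Matrix.transpose_add, htr, htr, add_comm]
  · intro a
    simp only [Matrix.add_apply, Matrix.single, Matrix.of_apply]
    rw [if_neg, if_neg, add_zero]
    · rintro ⟨rfl, rfl⟩; exact hij rfl
    · rintro ⟨rfl, rfl⟩; exact hij rfl

lemma altEquiv_apply {K : Type*} [Field K] {n : ℕ} (M : altSub K n)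
    (q : {p : Fin n × Fin n // p.1 < p.2}) :
    altEquiv K n M q = M.1 q.1.1 q.1.2 := rfl

lemma altEquiv_symm_single {K : Type*} [Field K] {n : ℕ}
    (p : {p : Fin n × Fin n // p.1 < p.2}) :
    ((altEquiv K n).symm (Pi.single p 1) : Matrix (Fin n) (Fin n) K) =
      single p.1.1 p.1.2 1 + single p.1.2 p.1.1 1 := by
  have hmem := genMat_mem_alt (K := K) (ne_of_lt p.2)
  have key : (altEquiv K n) ⟨_, hmem⟩ = Pi.single p 1 := by
    funext q
    rw [altEquiv_apply]
    simp only [Matrix.add_apply, Matrix.single, Matrix.of_apply, Pi.single_apply]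
    by_cases hq : q = p
    · subst hq
      rw [if_pos ⟨rfl, rfl⟩, if_neg, if_pos rfl, add_zero]
      rintro ⟨h1, h2⟩
      exact absurd (h1 ▸ q.2) (lt_irrefl _)
    · rw [if_neg, if_neg, if_neg (Ne.symm (fun h => hq h.symm)), add_zero]
      · rintro ⟨h1, h2⟩
        exact absurd (h1 ▸ q.2) (not_lt_of_gt (h2 ▸ p.2))
      · rintro ⟨h1, h2⟩
        exact hq (Subtype.ext (Prod.ext h1.symm h2.symm))
  rw [← key, LinearEquiv.symm_apply_apply]

/-- Let `K` be a field of characteristic 2 and `n ≥ 2`.  The derived algebra of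
the orthogonal Lie algebra `o_n(K)` of symmetric matrices equals the space
`Alt_n(K)` of alternating matrices (symmetric with zero diagonal), and hence
has dimension `n(n-1)/2`. -/
theorem o_derived_eq_alt {K : Type*} [Field K] [CharP K 2] (n : ℕ) (hn : 2 ≤ n) :
    let D : Submodule K (Matrix (Fin n) (Fin n) K) :=
      Submodule.span K
        {z | ∃ a b : Matrix (Fin n) (Fin n) K, a.IsSymm ∧ b.IsSymm ∧ z = ⁅a, b⁆}
    (↑D : Set (Matrix (Fin n) (Fin n) K)) =
      {M | M.IsSymm ∧ ∀ i, M i i = 0} ∧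
    Module.finrank K D = n * (n - 1) / 2 := by
  intro D
  classical
  set B : Module.Basis {p : Fin n × Fin n // p.1 < p.2} K (altSub K n) :=
    Module.Basis.ofEquivFun (altEquiv K n) with hB
  have hDA : D = altSub K n := by
    apply le_antisymm
    · rw [Submodule.span_le]
      rintro z ⟨a, b, ha, hb, rfl⟩
      exact bracket_mem_alt a b ha hb
    · have hspan : altSub K n =
          Submodule.span K (Set.range ((altSub K n).subtype ∘ B)) := by
        rw [Set.range_comp, Submodule.span_image, B.span_eq, Submodule.map_subtype_top]
      rw [hspan, Submodule.span_le]
      rintro _ ⟨p, rfl⟩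
      apply Submodule.subset_span
      have hBp : ((altSub K n).subtype ∘ B) p =
          single p.1.1 p.1.2 1 + single p.1.2 p.1.1 1 := by
        show ((B p : altSub K n) : Matrix (Fin n) (Fin n) K) = _
        rw [hB, Module.Basis.coe_ofEquivFun]
        exact altEquiv_symm_single p
      refine ⟨single p.1.1 p.1.1 1,
        single p.1.1 p.1.2 1 + single p.1.2 p.1.1 1, ?_, ?_, ?_⟩
      · ext a b
        simp [Matrix.single, and_comm]
      · exact (genMat_mem_alt (ne_of_lt p.2)).1
      · rw [hBp]
        exact gen_eq_bracket (ne_of_lt p.2)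
  constructor
  · rw [hDA]; rfl
  · rw [hDA, Module.finrank_eq_card_basis B, card_lt_pairs]
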